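/- arXiv:1605.04136 — 2 statements merged into one kernel-verified Lean document; each statement's English description precedes it below -/
import Mathlib

section
/- If F is a respectful function, then for every ordinal α and every binary relation R on the states, R ⊆ ∼_α implies F(R) ⊆ ∼_α. -/
universe u v

/-- `Progress Tr R S` means relation `R` progresses to relation `S`
in the labelled transition system with transition relation `Tr`. -/
def Progress {St : Type u} {Δ : Type v} (Tr : St → Δ → St → Prop)
    (R S : Set (St × St)) : Prop :=
  ∀ p q, (p, q) ∈ R →
    (∀ a p', Tr p a p' → ∃ q', Tr q a q' ∧ (p', q') ∈ S) ∧
    (∀ a q', Tr q a q' → ∃ p', Tr p a p' ∧ (p', q') ∈ S)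

/-- A function on relations is respectful if whenever `R ⊆ S` and `R ⤳ S`,
also `F R ⊆ F S` and `F R ⤳ F S`. -/
def Respectful {St : Type u} {Δ : Type v} (Tr : St → Δ → St → Prop)
    (F : Set (St × St) → Set (St × St)) : Prop :=
  ∀ R S : Set (St × St), R ⊆ S → Progress Tr R S →
    F R ⊆ F S ∧ Progress Tr (F R) (F S)

/-- Milner's stratification of bisimilarity: `∼₀ = univ`,
`∼_{α+1} = ⋃ {X | X ⤳ ∼_α}`, `∼_λ = ⋂_{β<λ} ∼_β` for limits. -/
noncomputable def Strat {St : Type u} {Δ : Type v} (Tr : St → Δ → St → Prop)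
    (α : Ordinal.{w}) : Set (St × St) :=
  Ordinal.limitRecOn α
    Set.univ
    (fun _ ih => ⋃₀ {X | Progress Tr X ih})
    (fun o _ ih => ⋂ (β : Ordinal.{w}) (h : β < o), ih β h)

/-!
Transfinite induction on `α`. At a successor, `R ⊆ ∼_{α+1}` says exactly that `R ⤳ ∼_α`
(and `R ⊆ ∼_α`, the stratification being decreasing); respectfulness turns this into
`F R ⤳ F ∼_α`, and the induction hypothesis applied to `∼_α` itself gives `F ∼_α ⊆ ∼_α`,
so `F R ⤳ ∼_α`, i.e. `F R ⊆ ∼_{α+1}`. Limits are intersections and pass through directly.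
-/

section Strat

variable {St : Type u} {Δ : Type v} (Tr : St → Δ → St → Prop)

theorem Progress.mono {Tr : St → Δ → St → Prop} {R R' S S' : Set (St × St)}
    (h : Progress Tr R S) (hR : R' ⊆ R) (hS : S ⊆ S') : Progress Tr R' S' := by
  intro p q hpq
  obtain ⟨forth, back⟩ := h p q (hR hpq)
  refine ⟨fun a p' hp => ?_, fun a q' hq => ?_⟩
  · obtain ⟨q', hq, hmem⟩ := forth a p' hp
    exact ⟨q', hq, hS hmem⟩
  · obtain ⟨p', hp, hmem⟩ := back a q' hq
    exact ⟨p', hp, hS hmem⟩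

theorem progress_sUnion {𝒳 : Set (Set (St × St))} {S : Set (St × St)}
    (h : ∀ X ∈ 𝒳, Progress Tr X S) : Progress Tr (⋃₀ 𝒳) S := by
  rintro p q ⟨X, hX, hpq⟩
  exact h X hX p q hpq

theorem strat_zero : Strat Tr (0 : Ordinal.{w}) = Set.univ :=
  Ordinal.limitRecOn_zero ..

theorem strat_add_one (α : Ordinal.{w}) :
    Strat Tr (α + 1) = ⋃₀ {X | Progress Tr X (Strat Tr α)} :=
  Ordinal.limitRecOn_add_one ..

theorem strat_limit {α : Ordinal.{w}} (h : Order.IsSuccLimit α) :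
    Strat Tr α = ⋂ (β : Ordinal.{w}) (_ : β < α), Strat Tr β :=
  Ordinal.limitRecOn_limit _ _ _ _ h

theorem subset_strat_add_one_iff {α : Ordinal.{w}} {X : Set (St × St)} :
    X ⊆ Strat Tr (α + 1) ↔ Progress Tr X (Strat Tr α) := by
  rw [strat_add_one]
  exact ⟨fun hX => (progress_sUnion Tr fun _ hY => hY).mono hX subset_rfl,
    fun hX => Set.subset_sUnion_of_mem hX⟩

theorem strat_limit_subset {α β : Ordinal.{w}} (hα : Order.IsSuccLimit α) (hβ : β < α) :
    Strat Tr α ⊆ Strat Tr β := by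
  rw [strat_limit Tr hα]
  exact Set.biInter_subset_of_mem hβ

theorem strat_add_one_progress (α : Ordinal.{w}) : Progress Tr (Strat Tr (α + 1)) (Strat Tr α) :=
  (subset_strat_add_one_iff Tr).1 subset_rfl

theorem strat_add_one_subset (α : Ordinal.{w}) : Strat Tr (α + 1) ⊆ Strat Tr α := by
  induction α using Ordinal.limitRecOn with
  | zero => simp [strat_zero]
  | add_one α ih =>
    exact (subset_strat_add_one_iff Tr).2 ((strat_add_one_progress Tr _).mono subset_rfl ih)
  | limit α hα ih =>
    rw [strat_limit Tr hα]
    refine Set.subset_iInter₂ fun β hβ => (ih β hβ).trans' ?_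
    exact (subset_strat_add_one_iff Tr).2
      ((strat_add_one_progress Tr α).mono subset_rfl (strat_limit_subset Tr hα hβ))

end Strat

theorem respectful_strat {St : Type u} {Δ : Type v} (Tr : St → Δ → St → Prop)
    (F : Set (St × St) → Set (St × St)) (hF : Respectful Tr F) :
    ∀ (α : Ordinal.{u}) (R : Set (St × St)), R ⊆ Strat Tr α → F R ⊆ Strat Tr α := by
  intro α
  induction α using Ordinal.limitRecOn with
  | zero => simp [strat_zero]
  | add_one α ih =>
    intro R hR
    have hR_prog : Progress Tr R (Strat Tr α) := (subset_strat_add_one_iff Tr).1 hR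
    obtain ⟨-, hFR_prog⟩ := hF R (Strat Tr α) (hR.trans (strat_add_one_subset Tr α)) hR_prog
    exact (subset_strat_add_one_iff Tr).2 (hFR_prog.mono subset_rfl (ih _ subset_rfl))
  | limit α hα ih =>
    intro R hR
    rw [strat_limit Tr hα]
    exact Set.subset_iInter₂ fun β hβ => ih β hβ R (hR.trans (strat_limit_subset Tr hα hβ))
end

section
/- Let (A, ≤) be a complete lattice and R a progression on A. Then the function f₀ : A → A defined by f₀(x) := ⨅{z_α | x ≤ z_α} is the unique largest s_R-compatible function: f₀ is monotone and s_R-compatible, and for every monotone s_R-compatible function f : A → A and every x ∈ A, f(x) ≤ f₀(x). -/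
/-!
The stratum `z_α` is the `α`-th transfinite iterate of `s_R` from `⊤`. Transfinite induction
shows that every monotone `s_R`-compatible `f` satisfies `f z_α ≤ z_α`; taking for `f` the map
`s_R` itself and the constant maps at post-fixpoints, the strata decrease and lie above every
post-fixpoint. Since the strata cannot all be distinct, they reach a fixpoint, so for each `x`
the infimum defining `f₀ x` is a minimum `z_γ` with `x ≤ z_γ`. Then `s_R x ≤ s_R z_γ = z_{γ+1}`
gives compatibility of `f₀`, and `f x ≤ f z_α ≤ z_α` whenever `x ≤ z_α` gives maximality.
-/

universe u

/-- A progression on a complete lattice `A` is a binary relation `R` with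
`≤ ∘ R ∘ ≤ ⊆ R` and, for every `b`, `⨆ {a | a R b}` itself related to `b`. -/
def IsProgression {A : Type u} [CompleteLattice A] (R : A → A → Prop) : Prop :=
  (∀ a' a b b' : A, a' ≤ a → R a b → b ≤ b' → R a' b') ∧
  (∀ b : A, R (sSup {a | R a b}) b)

/-- The transfinite stratification associated with a relation `R`:
`z_0 = ⊤`, `z_{α+1} = ⨆ {a | a R z_α}`, `z_λ = ⨅_{β<λ} z_β` for limits. -/
noncomputable def zStrat {A : Type u} [CompleteLattice A] (R : A → A → Prop)
    (α : Ordinal.{u}) : A :=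
  Ordinal.limitRecOn α
    ⊤
    (fun _ ih => sSup {a | R a ih})
    (fun o _ ih => ⨅ (β : Ordinal.{u}) (h : β < o), ih β h)

/-- The candidate largest function: `x ↦ ⨅ {z_α | x ≤ z_α}`. -/
noncomputable def lrfLat {A : Type u} [CompleteLattice A] (R : A → A → Prop) (x : A) : A :=
  ⨅ (α : Ordinal.{u}) (_ : x ≤ zStrat R α), zStrat R α

noncomputable def sR {A : Type u} [CompleteLattice A] (R : A → A → Prop) (x : A) : A :=
  sSup {a | R a x}

section

variable {A : Type u} [CompleteLattice A] {R : A → A → Prop}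

theorem IsProgression.monotone_sR (hR : IsProgression R) : Monotone (sR R) :=
  fun _ _ hxy => sSup_le_sSup fun a ha => hR.1 a a _ _ le_rfl ha hxy

theorem zStrat_zero : zStrat R 0 = ⊤ := Ordinal.limitRecOn_zero ..

theorem zStrat_succ (α : Ordinal.{u}) : zStrat R (Order.succ α) = sR R (zStrat R α) :=
  Ordinal.limitRecOn_add_one ..

theorem zStrat_limit {α : Ordinal.{u}} (h : Order.IsSuccLimit α) :
    zStrat R α = ⨅ (β : Ordinal.{u}) (_ : β < α), zStrat R β :=
  Ordinal.limitRecOn_limit _ _ _ _ h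

theorem lrfLat_mono : Monotone (lrfLat R) :=
  fun _ _ hxy => le_iInf₂ fun α hα => iInf₂_le α (hxy.trans hα)

variable (hs : Monotone (sR R))
include hs

theorem apply_zStrat_le {f : A → A} (hf : Monotone f) (hcomp : ∀ x, f (sR R x) ≤ sR R (f x))
    (α : Ordinal.{u}) : f (zStrat R α) ≤ zStrat R α := by
  induction α using WellFoundedLT.induction with
  | _ α IH =>
    rcases Ordinal.zero_or_succ_or_isSuccLimit α with rfl | ⟨γ, rfl⟩ | hlim
    · exact le_top.trans_eq zStrat_zero.symm
    · rw [zStrat_succ]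
      exact (hcomp _).trans (hs (IH γ (Order.lt_succ γ)))
    · rw [zStrat_limit hlim]
      exact le_iInf₂ fun β hβ => (hf (iInf₂_le β hβ)).trans (IH β hβ)

theorem le_zStrat_of_le_sR {y : A} (hy : y ≤ sR R y) (α : Ordinal.{u}) : y ≤ zStrat R α :=
  apply_zStrat_le hs (f := fun _ => y) monotone_const (fun _ => hy) α

theorem zStrat_succ_le (α : Ordinal.{u}) : zStrat R (Order.succ α) ≤ zStrat R α :=
  (zStrat_succ α).trans_le (apply_zStrat_le hs hs (fun _ => le_rfl) α)

theorem zStrat_antitone : Antitone (zStrat R) := by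
  intro β α hβα
  induction α using WellFoundedLT.induction with
  | _ α IH =>
    rcases hβα.eq_or_lt with rfl | hlt
    · exact le_rfl
    rcases Ordinal.zero_or_succ_or_isSuccLimit α with rfl | ⟨γ, rfl⟩ | hlim
    · exact absurd hlt not_lt_zero
    · exact (zStrat_succ_le hs γ).trans (IH γ (Order.lt_succ γ) (Order.lt_succ_iff.mp hlt))
    · rw [zStrat_limit hlim]
      exact iInf₂_le β hlt

theorem exists_zStrat_le_zStrat : ∃ α : Ordinal.{u}, ∀ β, zStrat R α ≤ zStrat R β := by
  obtain ⟨α, β, heq, hne⟩ :=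
    Function.not_injective_iff.mp (not_injective_of_ordinal (zStrat R))
  wlog hlt : α < β generalizing α β
  · exact this β α heq.symm hne.symm (hne.lt_or_gt.resolve_left hlt)
  have hfix : zStrat R α ≤ sR R (zStrat R α) := by
    rw [← zStrat_succ, heq]
    exact zStrat_antitone hs (Order.succ_le_of_lt hlt)
  exact ⟨α, le_zStrat_of_le_sR hs hfix⟩

theorem exists_lrfLat_eq_zStrat (x : A) :
    ∃ γ : Ordinal.{u}, x ≤ zStrat R γ ∧ lrfLat R x = zStrat R γ := by
  suffices ∃ γ, x ≤ zStrat R γ ∧ ∀ β, x ≤ zStrat R β → zStrat R γ ≤ zStrat R β by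
    obtain ⟨γ, hxγ, hmin⟩ := this
    exact ⟨γ, hxγ, le_antisymm (iInf₂_le γ hxγ) (le_iInf₂ hmin)⟩
  by_cases hall : ∀ β : Ordinal.{u}, x ≤ zStrat R β
  · obtain ⟨α, hα⟩ := exists_zStrat_le_zStrat hs
    exact ⟨α, hall α, fun β _ => hα β⟩
  -- `δ` is the first stratum not above `x`; it can be neither `0` nor a limit.
  obtain ⟨δ, hδ, hδmin⟩ := 
    WellFounded.has_min Ordinal.lt_wf {β | ¬x ≤ zStrat R β} (not_forall.mp hall)
  have hbelow : ∀ β < δ, x ≤ zStrat R β := fun β hβ => not_not.mp fun h => hδmin β h hβ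
  rcases Ordinal.zero_or_succ_or_isSuccLimit δ with rfl | ⟨γ, rfl⟩ | hlim
  · exact (hδ (le_top.trans_eq zStrat_zero.symm)).elim
  · refine ⟨γ, hbelow γ (Order.lt_succ γ), fun β hβ => zStrat_antitone hs ?_⟩
    by_contra! hγβ
    exact hδ (hβ.trans (zStrat_antitone hs (Order.succ_le_of_lt hγβ)))
  · exact (hδ ((le_iInf₂ hbelow).trans_eq (zStrat_limit hlim).symm)).elim

theorem lrfLat_sR_le (x : A) : lrfLat R (sR R x) ≤ sR R (lrfLat R x) := by
  obtain ⟨γ, hxγ, hγ⟩ := exists_lrfLat_eq_zStrat hs x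
  have hsx : sR R x ≤ zStrat R (Order.succ γ) := (hs hxγ).trans_eq (zStrat_succ γ).symm
  calc lrfLat R (sR R x) ≤ zStrat R (Order.succ γ) := iInf₂_le (Order.succ γ) hsx
    _ = sR R (lrfLat R x) := by rw [zStrat_succ, hγ]

theorem le_lrfLat_of_compatible {f : A → A} (hf : Monotone f)
    (hcomp : ∀ x, f (sR R x) ≤ sR R (f x)) (x : A) : f x ≤ lrfLat R x :=
  le_iInf₂ fun α hα => (hf hα).trans (apply_zStrat_le hs hf hcomp α)

end

theorem lrfLat_largest_compatible {A : Type u} [CompleteLattice A] (R : A → A → Prop)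
    (hR : IsProgression R) :
    Monotone (lrfLat R) ∧
    (∀ x : A, lrfLat R (sSup {a | R a x}) ≤ sSup {a | R a (lrfLat R x)}) ∧
    ∀ f : A → A, Monotone f →
      (∀ x : A, f (sSup {a | R a x}) ≤ sSup {a | R a (f x)}) →
      ∀ x : A, f x ≤ lrfLat R x :=
  ⟨lrfLat_mono, lrfLat_sR_le hR.monotone_sR,
    fun _ hf hcomp => le_lrfLat_of_compatible hR.monotone_sR hf hcomp⟩
end
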